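/- Let φ : ℝ² → ℂ be a continuous function and let w : ℝ² → ℝ be a Schwartz function satisfying Δw(x) = |φ(x)|² w(x) for every x ∈ ℝ². Then w = 0. (Consequently, two Schwartz solutions of −Δu + |φ|²u = g with the same right-hand side coincide.) -/

import Mathlib

/-!
`w²` is subharmonic, since `Δ(w²) = 2wΔw + 2|∇w|² = 2|φ|²w² + 2|∇w|² ≥ 0`, and it tends to `0` at
infinity, so the weak maximum principle gives `w² ≤ 0`. The maximum principle is the usual
perturbation argument: `w² + ε‖x‖²` has positive Laplacian, hence no interior local maximum, where
the Hessian would be negative semidefinite.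
-/

open Complex

noncomputable section

abbrev Plane := EuclideanSpace ℝ (Fin 2)

/-- Partial derivative of a real-valued function on ℝ² in the `i`-th coordinate direction. -/
def pd (i : Fin 2) (f : Plane → ℝ) (x : Plane) : ℝ :=
  fderiv ℝ f x (EuclideanSpace.single i 1)

open Filter Topology Metric Laplacian

theorem IsLocalMax.deriv_deriv_nonpos {g : ℝ → ℝ} {a : ℝ} (h : IsLocalMax g a)
    (hc : ContinuousAt g a) : deriv (deriv g) a ≤ 0 := by
  by_contra! hpos
  -- by the second derivative test `a` would also be a local minimum, so `g` is locally constant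
  have hconst : g =ᶠ[𝓝 a] fun _ => g a :=
    (h.and (isLocalMin_of_deriv_deriv_pos hpos h.deriv_eq_zero hc)).mono
      fun _ hx => le_antisymm hx.1 hx.2
  have hderiv : deriv g =ᶠ[𝓝 a] fun _ => 0 := hconst.deriv.trans (by simp)
  exact hpos.ne' (by simp [hderiv.deriv_eq])

section NormedSpace

variable {E : Type*} [NormedAddCommGroup E] [NormedSpace ℝ E] {f : E → ℝ}

theorem ContDiff.hasFDerivAt_fderiv_apply (hf : ContDiff ℝ 2 f) (z v : E) :
    HasFDerivAt (fun x => fderiv ℝ f x v) ((fderiv ℝ (fderiv ℝ f) z).flip v) z := by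
  have := ((hf.fderiv_right (m := 1) le_rfl).differentiable one_ne_zero z).hasFDerivAt
  simpa using this.clm_apply (hasFDerivAt_const v z)

theorem IsLocalMax.iteratedFDeriv_two_nonpos (hf : ContDiff ℝ 2 f) {z : E} (h : IsLocalMax f z)
    (v : E) : iteratedFDeriv ℝ 2 f z ![v, v] ≤ 0 := by
  set L : ℝ → E := fun t => z + t • v with hL_def
  have hL : ∀ t, HasDerivAt L v t := fun t => by
    simpa [hL_def] using ((hasDerivAt_id t).smul_const v).const_add z
  have hL0 : L 0 = z := by simp [hL_def]
  have hderiv : deriv (f ∘ L) = fun t => fderiv ℝ f (L t) v := funext fun t =>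
    (((hf.differentiable two_ne_zero) (L t)).hasFDerivAt.comp_hasDerivAt t (hL t)).deriv
  have hderiv2 : deriv (deriv (f ∘ L)) 0 = iteratedFDeriv ℝ 2 f z ![v, v] := by
    rw [hderiv, iteratedFDeriv_two_apply, ← hL0]
    exact ((hf.hasFDerivAt_fderiv_apply (L 0) v).comp_hasDerivAt (0 : ℝ) (hL 0)).deriv
  rw [← hderiv2]
  have hLc : Continuous L := by fun_prop
  rw [← hL0] at h
  exact (h.comp_continuous hLc.continuousAt).deriv_deriv_nonpos
    (hf.continuous.comp hLc).continuousAt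

end NormedSpace

section InnerProductSpace

variable {E : Type*} [NormedAddCommGroup E] [InnerProductSpace ℝ E] [FiniteDimensional ℝ E]
  {f : E → ℝ}

theorem IsLocalMax.laplacian_nonpos (hf : ContDiff ℝ 2 f) {z : E} (h : IsLocalMax f z) :
    Δ f z ≤ 0 := by
  rw [InnerProductSpace.laplacian_eq_iteratedFDeriv_stdOrthonormalBasis]
  exact Finset.sum_nonpos fun i _ => h.iteratedFDeriv_two_nonpos hf _

theorem laplacian_norm_sq (x : E) :
    Δ (fun x : E => ‖x‖ ^ 2) x = 2 * Module.finrank ℝ E := by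
  have hess : fderiv ℝ (fderiv ℝ fun x : E => ‖x‖ ^ 2) x = 2 • innerSL ℝ := by
    rw [fderiv_norm_sq]
    exact (2 • innerSL ℝ : E →L[ℝ] E →L[ℝ] ℝ).fderiv
  have hbasis : ∀ i, innerSL ℝ (stdOrthonormalBasis ℝ E i) (stdOrthonormalBasis ℝ E i) = 1 :=
    fun i => by
      rw [innerSL_apply_apply, real_inner_self_eq_norm_sq,
        (stdOrthonormalBasis ℝ E).orthonormal.1 i, one_pow]
  simp [InnerProductSpace.laplacian_eq_iteratedFDeriv_stdOrthonormalBasis,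
    iteratedFDeriv_two_apply, hess, hbasis, mul_comm]

theorem le_of_laplacian_pos_of_le_on_sphere (hf : ContDiff ℝ 2 f) {c : E} {R M : ℝ}
    (hΔ : ∀ y ∈ ball c R, 0 < Δ f y) (hM : ∀ y ∈ sphere c R, f y ≤ M) {x : E}
    (hx : x ∈ closedBall c R) : f x ≤ M := by
  obtain ⟨z, hz, hmax⟩ :=
    (isCompact_closedBall c R).exists_isMaxOn ⟨x, hx⟩ hf.continuous.continuousOn
  have hz_sphere : z ∈ sphere c R := by
    by_contra hz_not
    have hz_ball : z ∈ ball c R := lt_of_le_of_ne (mem_closedBall.mp hz) hz_not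
    exact (hΔ z hz_ball).not_ge
      ((hmax.isLocalMax (closedBall_mem_nhds_of_mem hz_ball)).laplacian_nonpos hf)
  exact (hmax hx).trans (hM z hz_sphere)

theorem le_of_laplacian_nonneg_of_le_on_sphere [Nontrivial E] (hf : ContDiff ℝ 2 f) {c : E}
    {R M : ℝ} (hΔ : ∀ y ∈ ball c R, 0 ≤ Δ f y) (hM : ∀ y ∈ sphere c R, f y ≤ M) {x : E}
    (hx : x ∈ closedBall c R) : f x ≤ M := by
  set B := (‖c‖ + R) ^ 2
  have hB : ∀ y ∈ sphere c R, ‖y‖ ^ 2 ≤ B := fun y hy => by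
    have : ‖y‖ ≤ ‖c‖ + R := by
      simpa [← mem_sphere_iff_norm.mp hy] using norm_le_norm_add_norm_sub' y c
    show ‖y‖ ^ 2 ≤ (‖c‖ + R) ^ 2
    gcongr
  have hperturbed : ∀ ε > 0, f x ≤ M + ε * B := fun ε hε => by
    have hq : ContDiff ℝ 2 fun y : E => ‖y‖ ^ 2 := contDiff_norm_sq ℝ
    have hεq : ContDiff ℝ 2 (ε • fun y : E => ‖y‖ ^ 2) := hq.const_smul ε
    have hΔu : ∀ y ∈ ball c R, 0 < Δ (f + ε • fun y : E => ‖y‖ ^ 2) y := fun y hy => by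
      rw [hf.contDiffAt.laplacian_add hεq.contDiffAt,
        InnerProductSpace.laplacian_smul ε hq.contDiffAt, laplacian_norm_sq, smul_eq_mul]
      have := hΔ y hy
      have : (0 : ℝ) < Module.finrank ℝ E := Nat.cast_pos.mpr Module.finrank_pos
      positivity
    have hMu : ∀ y ∈ sphere c R, (f + ε • fun y : E => ‖y‖ ^ 2) y ≤ M + ε * B := fun y hy => by
      simp only [Pi.add_apply, Pi.smul_apply, smul_eq_mul]
      gcongr
      exacts [hM y hy, hB y hy]
    have := le_of_laplacian_pos_of_le_on_sphere (hf.add hεq) hΔu hMu hx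
    simp only [Pi.smul_apply, smul_eq_mul] at this
    linarith [mul_nonneg hε.le (sq_nonneg ‖x‖)]
  have hlim : Tendsto (fun ε => M + ε * B) (𝓝[>] 0) (𝓝 M) := by
    refine tendsto_nhdsWithin_of_tendsto_nhds ?_
    exact (by fun_prop : Continuous fun ε : ℝ => M + ε * B).tendsto' 0 M (by simp)
  exact ge_of_tendsto hlim (eventually_nhdsWithin_of_forall hperturbed)

theorem le_zero_of_laplacian_nonneg_of_tendsto_cocompact [Nontrivial E] (hf : ContDiff ℝ 2 f)
    (hΔ : ∀ y, 0 ≤ Δ f y) (hlim : Tendsto f (cocompact E) (𝓝 0)) (x : E) : f x ≤ 0 := by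
  refine le_of_forall_pos_le_add fun δ hδ => ?_
  rw [← cobounded_eq_cocompact, ← comap_norm_atTop] at hlim
  obtain ⟨R₀, -, hR₀⟩ := (atTop_basis.comap norm).tendsto_left_iff.mp hlim _ (Iic_mem_nhds hδ)
  refine le_of_laplacian_nonneg_of_le_on_sphere hf (c := 0) (R := max R₀ ‖x‖)
    (fun y _ => hΔ y) (fun y hy => ?_) (mem_closedBall_zero_iff.mpr (le_max_right _ _))
  rw [zero_add]
  exact hR₀ (by simp [mem_sphere_zero_iff_norm.mp hy])

end InnerProductSpace

section Plane

variable {f : Plane → ℝ}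

theorem HasFDerivAt.pd_eq {f' : Plane →L[ℝ] ℝ} {x : Plane} (h : HasFDerivAt f f' x)
    (i : Fin 2) :
    pd i f x = f' (EuclideanSpace.single i 1) := by
  rw [pd, h.fderiv]

theorem pd_pd_eq_fderiv_fderiv (hf : ContDiff ℝ 2 f) (i j : Fin 2) (x : Plane) :
    pd j (pd i f) x =
      fderiv ℝ (fderiv ℝ f) x (EuclideanSpace.single j 1) (EuclideanSpace.single i 1) :=
  (hf.hasFDerivAt_fderiv_apply x _).pd_eq j

theorem laplacian_eq_pd (hf : ContDiff ℝ 2 f) (x : Plane) :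
    Δ f x = pd 0 (pd 0 f) x + pd 1 (pd 1 f) x := by
  simp [InnerProductSpace.laplacian_eq_iteratedFDeriv_orthonormalBasis f
    (EuclideanSpace.basisFun (Fin 2) ℝ), Fin.sum_univ_two, iteratedFDeriv_two_apply,
    pd_pd_eq_fderiv_fderiv hf]

theorem pd_pd_mul_self (hf : ContDiff ℝ 2 f) (i : Fin 2) (x : Plane) :
    pd i (pd i fun y => f y * f y) x = 2 * (f x * pd i (pd i f) x) + 2 * pd i f x ^ 2 := by
  have hDf : ∀ y, HasFDerivAt f (fderiv ℝ f y) y :=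
    fun y => (hf.differentiable two_ne_zero y).hasFDerivAt
  have hpd_sq : pd i (fun y => f y * f y) = fun y => 2 * (f y * pd i f y) := funext fun y => by
    rw [HasFDerivAt.pd_eq (f := fun y => f y * f y) ((hDf y).mul (hDf y))]
    simp only [add_apply, smul_apply, smul_eq_mul, pd]
    ring
  have hDpd := hf.hasFDerivAt_fderiv_apply x (EuclideanSpace.single i 1)
  rw [hpd_sq, HasFDerivAt.pd_eq (f := fun y => 2 * (f y * pd i f y))
    (((hDf x).mul hDpd).const_mul 2), pd_pd_eq_fderiv_fderiv hf]
  simp only [smul_apply, add_apply, ContinuousLinearMap.flip_apply, smul_eq_mul, pd]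
  ring

end Plane

theorem elliptic_uniqueness_general (φ : Plane → ℂ)
    (w : SchwartzMap Plane ℝ)
    (hw : ∀ x : Plane, pd 0 (pd 0 (fun y => w y)) x + pd 1 (pd 1 (fun y => w y)) x =
      ‖φ x‖ ^ 2 * w x) :
    ∀ x : Plane, w x = 0 := by
  intro x
  have hw2 : ContDiff ℝ 2 fun y => w y := w.smooth 2
  have hsubharmonic : ∀ y, 0 ≤ Δ (fun y => w y * w y) y := fun y => by
    rw [laplacian_eq_pd (hw2.mul hw2), pd_pd_mul_self hw2, pd_pd_mul_self hw2]
    have hmul : w y * (pd 0 (pd 0 fun y => w y) y + pd 1 (pd 1 fun y => w y) y) =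
        (‖φ y‖ * w y) ^ 2 := by
      rw [hw y]; ring
    linarith [sq_nonneg (‖φ y‖ * w y), sq_nonneg (pd 0 (fun y => w y) y),
      sq_nonneg (pd 1 (fun y => w y) y)]
  have hdecay : Tendsto (fun y => w y * w y) (cocompact Plane) (𝓝 0) := by
    simpa using (zero_at_infty w).mul (zero_at_infty w)
  exact mul_self_eq_zero.mp <| le_antisymm
    (le_zero_of_laplacian_nonneg_of_tendsto_cocompact (hw2.mul hw2) hsubharmonic hdecay x)
    (mul_self_nonneg _)

/-- If `w` is a Schwartz function on ℝ² with `Δw = |φ|² w` for a continuous `φ`,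
then `w = 0`.  (Uniqueness for the elliptic equation `−Δu + |φ|²u = g`.) -/
theorem elliptic_uniqueness (φ : Plane → ℂ) (hφ : Continuous φ)
    (w : SchwartzMap Plane ℝ)
    (hw : ∀ x : Plane, pd 0 (pd 0 (fun y => w y)) x + pd 1 (pd 1 (fun y => w y)) x =
      ‖φ x‖ ^ 2 * w x) :
    ∀ x : Plane, w x = 0 :=
  elliptic_uniqueness_general φ w hw

end
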